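/- Let X be a centered Gaussian vector in ℝ^n with covariance matrix Σ satisfying Σ ≤ σ² I (in the Loewner order), and let X̄ be a centered Gaussian vector with covariance σ² I. Then for every x ≥ 0, P(|X|² < x) ≥ P(|X̄|² < x). -/

import Mathlib

/-! Write `X = L g` and `X̄ = σ g` with `g` standard Gaussian. The hypothesis `L Lᵀ ≤ σ² I` says
that `Lᵀ` has operator norm at most `σ`, hence so does `L` (by Cauchy–Schwarz,
`|L v|⁴ = (v ⬝ Lᵀ L v)² ≤ |v|² |Lᵀ L v|²`). So `|L g|² ≤ |σ g|²` pointwise, and the event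
`|σ g|² < x` is contained in the event `|L g|² < x`. -/

open MeasureTheory ProbabilityTheory Matrix

namespace Matrix

variable {m n : Type*} [Fintype m] [Fintype n]

theorem dotProduct_sq_le_dotProduct_self_mul_dotProduct_self (v w : n → ℝ) :
    (v ⬝ᵥ w) ^ 2 ≤ (v ⬝ᵥ v) * (w ⬝ᵥ w) := by
  simpa only [dotProduct, sq] using Finset.sum_mul_sq_le_sq_mul_sq Finset.univ v w

theorem PosSemidef.transpose_mulVec_dotProduct_self_le [DecidableEq m] {c : ℝ}
    {L : Matrix m n ℝ} (h : (c • 1 - L * Lᵀ).PosSemidef) (w : m → ℝ) :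
    (Lᵀ *ᵥ w) ⬝ᵥ (Lᵀ *ᵥ w) ≤ c * (w ⬝ᵥ w) := by
  have hnonneg := h.dotProduct_mulVec_nonneg w
  rw [star_trivial, sub_mulVec, dotProduct_sub, smul_mulVec, one_mulVec, dotProduct_smul,
    ← mulVec_mulVec, dotProduct_mulVec, ← mulVec_transpose, smul_eq_mul] at hnonneg
  linarith

theorem mulVec_dotProduct_self_le_of_transpose {c : ℝ} (hc : 0 ≤ c) {L : Matrix m n ℝ}
    (hLt : ∀ w, (Lᵀ *ᵥ w) ⬝ᵥ (Lᵀ *ᵥ w) ≤ c * (w ⬝ᵥ w)) (v : n → ℝ) :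
    (L *ᵥ v) ⬝ᵥ (L *ᵥ v) ≤ c * (v ⬝ᵥ v) := by
  set a := (L *ᵥ v) ⬝ᵥ (L *ᵥ v)
  have ha : 0 ≤ a := Fintype.sum_nonneg fun _ => mul_self_nonneg _
  have hv : 0 ≤ v ⬝ᵥ v := Fintype.sum_nonneg fun _ => mul_self_nonneg _
  have hsq : a ^ 2 ≤ (c * (v ⬝ᵥ v)) * a := by
    calc a ^ 2 = (v ⬝ᵥ Lᵀ *ᵥ (L *ᵥ v)) ^ 2 := by rw [dotProduct_transpose_mulVec]
      _ ≤ (v ⬝ᵥ v) * ((Lᵀ *ᵥ (L *ᵥ v)) ⬝ᵥ (Lᵀ *ᵥ (L *ᵥ v))) :=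
        dotProduct_sq_le_dotProduct_self_mul_dotProduct_self _ _
      _ ≤ (v ⬝ᵥ v) * (c * a) := mul_le_mul_of_nonneg_left (hLt _) hv
      _ = (c * (v ⬝ᵥ v)) * a := by ring
  nlinarith [mul_nonneg hc hv]

end Matrix

theorem stmt9_general {n : ℕ} (L : Matrix (Fin n) (Fin n) ℝ) (σ : ℝ)
    (hdom : ((σ ^ 2) • (1 : Matrix (Fin n) (Fin n) ℝ) - L * Lᵀ).PosSemidef)
    (x : ℝ) :
    (Measure.pi fun _ : Fin n => gaussianReal 0 1) {g | (σ • g) ⬝ᵥ (σ • g) < x}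
      ≤ (Measure.pi fun _ : Fin n => gaussianReal 0 1) {g | (L *ᵥ g) ⬝ᵥ (L *ᵥ g) < x} := by
  refine measure_mono fun g (hg : (σ • g) ⬝ᵥ (σ • g) < x) => ?_
  calc (L *ᵥ g) ⬝ᵥ (L *ᵥ g) ≤ σ ^ 2 * (g ⬝ᵥ g) :=
        mulVec_dotProduct_self_le_of_transpose (sq_nonneg σ)
          hdom.transpose_mulVec_dotProduct_self_le g
    _ = (σ • g) ⬝ᵥ (σ • g) := by
        rw [smul_dotProduct, dotProduct_smul, smul_eq_mul, smul_eq_mul]; ring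
    _ < x := hg

/-- Stochastic domination: if `X = L g` is a centered Gaussian vector with covariance
`L Lᵀ ≤ σ² I` and `X̄ = σ g` has covariance `σ² I` (with `g` a standard Gaussian vector),
then `P(|X|² < x) ≥ P(|X̄|² < x)` for every `x ≥ 0`. -/
theorem stmt9 {n : ℕ} (L : Matrix (Fin n) (Fin n) ℝ) (σ : ℝ) (hσ : 0 < σ)
    (hdom : ((σ ^ 2) • (1 : Matrix (Fin n) (Fin n) ℝ) - L * Lᵀ).PosSemidef)
    (x : ℝ) (hx : 0 ≤ x) :
    (Measure.pi fun _ : Fin n => gaussianReal 0 1) {g | (σ • g) ⬝ᵥ (σ • g) < x}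
      ≤ (Measure.pi fun _ : Fin n => gaussianReal 0 1) {g | (L *ᵥ g) ⬝ᵥ (L *ᵥ g) < x} :=
  stmt9_general L σ hdom x
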